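/- Let K be the kernel of the homomorphism θ : F_2 × F_2 × F_2 → ℤ² (where each F_2 is free of rank 2 with basis e^(i)_1, e^(i)_2 and ℤ² has basis t_1, t_2) given by θ(e^(i)_j) = t_j for i = 1,2,3 and j = 1,2. Then for every finite presentation P = ⟨A | R⟩ of K, the Dehn function δ_P satisfies n³ ⪯ δ_P; that is, there exists a constant C > 0 such that n³ ≤ C·δ_P(Cn + C) + Cn + C for all n ∈ ℕ. -/

import Mathlib

/-!
The coordinates of the three free factors in the integral Heisenberg group define a normalized
`ℤ`-valued 2-cocycle on `K` (the cocycle identity holds there because the `e`- and the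
`f`-coordinates of an element of `K` sum to zero), hence a central extension `ℤ → K̃ → K`.
Lift the marking `F(A) → K` to `F(A) → K̃`: a null-homotopic word lands in the central `ℤ`,
and a product of `N` conjugates of relators lands in `[-N·B, N·B]`, where `B` bounds the
lifts of the finitely many relators. So the central coordinate of a word bounds its area
linearly from below.

With `α = (a, a⁻¹, 1)`, `α' = (1, a, a⁻¹)` and `β = (b, b⁻¹, 1)`, the elements `(αα')ⁿ` and
`[β⁻ⁿ, α'ⁿ] = (1, [bⁿ, aⁿ], 1)` commute and are represented by words of length `O(n)`. For
commuting `g, h` the commutator of lifts is the central element `c(g, h) - c(h, g)`, which here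
equals `2n³`.
-/

/-- The element `t_j` of `ℤ^r` (written multiplicatively), where indices `j ≥ r` map to `0`. -/
def tvec (m r : ℕ) (j : Fin m) : Multiplicative (Fin r → ℤ) :=
  Multiplicative.ofAdd (if h : (j : ℕ) < r then Pi.single (⟨j, h⟩ : Fin r) (1 : ℤ) else 0)

/-- The homomorphism `F_m → ℤ^r` sending `e_j ↦ t_j` for `j ≤ r` and `e_j ↦ 0` for `j > r`. -/
def facHom (m r : ℕ) : FreeGroup (Fin m) →* Multiplicative (Fin r → ℤ) :=
  FreeGroup.lift (tvec m r)

/-- The homomorphism `θ : F_m^(1) × ⋯ × F_m^(n) → ℤ^r` with `θ(e^(i)_j) = t_j` for `j ≤ r`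
and `θ(e^(i)_j) = 0` for `j > r`.  For `n = 3`, `m = r = 2` this is the map
`F_2 × F_2 × F_2 → ℤ²` with `θ(e^(i)_j) = t_j` for all `i, j`. -/
def thetaHom (n m r : ℕ) : (∀ _ : Fin n, FreeGroup (Fin m)) →* Multiplicative (Fin r → ℤ) where
  toFun g := ∏ i, facHom m r (g i)
  map_one' := by simp
  map_mul' a b := by simp [Finset.prod_mul_distrib]

/-- The group `K^n_m(r) = ker θ`; the group `K` of the theorem is `Kgrp 3 2 2`. -/
def Kgrp (n m r : ℕ) : Subgroup (∀ _ : Fin n, FreeGroup (Fin m)) := (thetaHom n m r).ker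

/-- `AreaLE R g N` says that, in the free group, `g` is a product of `N` conjugates of
elements of `R ∪ R⁻¹`. -/
def AreaLE {A : Type} (R : Set (FreeGroup A)) (g : FreeGroup A) (N : ℕ) : Prop :=
  ∃ x r : Fin N → FreeGroup A, (∀ i, r i ∈ R ∪ R⁻¹) ∧
    g = (List.ofFn (fun i => x i * r i * (x i)⁻¹)).prod

/-- The area of a null-homotopic word over the presentation with relator set `R`: the least
`N` such that the word is freely equal to a product of `N` conjugates of relators. -/
noncomputable def area {A : Type} (R : Set (FreeGroup A)) (g : FreeGroup A) : ℕ :=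
  sInf {N | AreaLE R g N}

/-- The Dehn function of the presentation given by the marking `μ : F(A) → G` and the
relator set `R`: the maximal area of a null-homotopic word of length at most `n`. -/
noncomputable def dehn {A : Type} {G : Type*} [Group G] (μ : FreeGroup A →* G)
    (R : Set (FreeGroup A)) (n : ℕ) : ℕ :=
  sSup {a | ∃ w : List (A × Bool), w.length ≤ n ∧ μ (FreeGroup.mk w) = 1 ∧
    a = area R (FreeGroup.mk w)}

open scoped commutatorElement

structure NormalizedTwoCocycle (G : Type*) [Group G] where
  toFun : G → G → ℤ
  map_one_left : ∀ g, toFun 1 g = 0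
  map_one_right : ∀ g, toFun g 1 = 0
  cocycle : ∀ g h k, toFun g h + toFun (g * h) k = toFun h k + toFun g (h * k)

namespace NormalizedTwoCocycle

variable {G : Type*} [Group G] (c : NormalizedTwoCocycle G)

@[ext] structure Extension (c : NormalizedTwoCocycle G) where
  base : G
  fiber : ℤ

namespace Extension

instance : Mul c.Extension :=
  ⟨fun x y => ⟨x.base * y.base, x.fiber + y.fiber + c.toFun x.base y.base⟩⟩
instance : One c.Extension := ⟨⟨1, 0⟩⟩
instance : Inv c.Extension := ⟨fun x => ⟨x.base⁻¹, -x.fiber - c.toFun x.base⁻¹ x.base⟩⟩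

variable {c}

@[simp] lemma base_mul (x y : c.Extension) : (x * y).base = x.base * y.base := rfl
@[simp] lemma fiber_mul (x y : c.Extension) :
    (x * y).fiber = x.fiber + y.fiber + c.toFun x.base y.base := rfl
@[simp] lemma base_one : (1 : c.Extension).base = 1 := rfl
@[simp] lemma fiber_one : (1 : c.Extension).fiber = 0 := rfl
@[simp] lemma base_inv (x : c.Extension) : x⁻¹.base = x.base⁻¹ := rfl
@[simp] lemma fiber_inv (x : c.Extension) :
    x⁻¹.fiber = -x.fiber - c.toFun x.base⁻¹ x.base := rfl

instance : Group c.Extension where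
  mul_assoc x y z := by
    ext
    · simp [mul_assoc]
    · simp only [fiber_mul, base_mul]
      linarith [c.cocycle x.base y.base z.base]
  one_mul x := by ext <;> simp [c.map_one_left]
  mul_one x := by ext <;> simp [c.map_one_right]
  inv_mul_cancel x := by ext <;> simp; ring

end Extension

open Extension

def inl : Multiplicative ℤ →* c.Extension where
  toFun z := ⟨1, z.toAdd⟩
  map_one' := rfl
  map_mul' x y := by ext <;> simp [c.map_one_left]

@[simp] lemma base_inl (z : Multiplicative ℤ) : (c.inl z).base = 1 := rfl
@[simp] lemma fiber_inl (z : Multiplicative ℤ) : (c.inl z).fiber = z.toAdd := rfl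

lemma inl_injective : Function.Injective c.inl := fun _ _ h => congrArg fiber h

lemma inl_mem_center (z : Multiplicative ℤ) : c.inl z ∈ Subgroup.center c.Extension :=
  Subgroup.mem_center_iff.mpr fun x => by ext <;> simp [c.map_one_left, c.map_one_right]; ring

lemma eq_inl_fiber {x : c.Extension} (hx : x.base = 1) : x = c.inl (.ofAdd x.fiber) := by
  ext
  · exact hx
  · rfl

lemma commutatorElement_eq_inl {x y : c.Extension} (h : Commute x.base y.base) :
    ⁅x, y⁆ = c.inl (.ofAdd (c.toFun x.base y.base - c.toFun y.base x.base)) := by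
  set z := c.inl (.ofAdd (c.toFun x.base y.base - c.toFun y.base x.base))
  have hxy : x * y = y * x * z := by
    ext <;> simp only [z, base_mul, fiber_mul, base_inl, fiber_inl, toAdd_ofAdd, h.eq, mul_one,
      c.map_one_right]
    ring
  have hz : ∀ g, g * z = z * g := Subgroup.mem_center_iff.mp (c.inl_mem_center _)
  rw [commutatorElement_def, hxy, hz (y * x)]
  group

variable {A : Type}

def lift (μ : FreeGroup A →* G) : FreeGroup A →* c.Extension :=
  FreeGroup.lift fun a => ⟨μ (.of a), 0⟩

@[simp] lemma base_lift (μ : FreeGroup A →* G) (x : FreeGroup A) : (c.lift μ x).base = μ x := by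
  induction x with
  | C1 => simp
  | of a => simp [lift]
  | inv_of a h => simp [h]
  | mul x y hx hy => simp [hx, hy]

lemma fiber_lift_commutatorElement (μ : FreeGroup A →* G) {x y : FreeGroup A}
    (h : Commute (μ x) (μ y)) :
    (c.lift μ ⁅x, y⁆).fiber = c.toFun (μ x) (μ y) - c.toFun (μ y) (μ x) := by
  rw [map_commutatorElement, c.commutatorElement_eq_inl (by simpa using h), fiber_inl,
    toAdd_ofAdd, base_lift, base_lift]

end NormalizedTwoCocycle

section Area

variable {A : Type} {R : Set (FreeGroup A)} {g : FreeGroup A}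

theorem exists_areaLE (hg : g ∈ Subgroup.normalClosure R) : ∃ N, AreaLE R g N := by
  rw [Subgroup.normalClosure, ← Subgroup.mem_toSubmonoid, Subgroup.closure_toSubmonoid] at hg
  obtain ⟨l, hl, rfl⟩ := Submonoid.exists_list_of_mem_closure hg
  have hconj : ∀ i : Fin l.length, ∃ x r, r ∈ R ∪ R⁻¹ ∧ l.get i = x * r * x⁻¹ := by
    intro i
    rcases hl _ (l.get_mem i) with h | h
    · obtain ⟨r, hr, hconj⟩ := Group.mem_conjugatesOfSet_iff.mp h
      obtain ⟨x, hx⟩ := isConj_iff.mp hconj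
      exact ⟨x, r, .inl hr, hx.symm⟩
    · obtain ⟨r, hr, hconj⟩ := Group.mem_conjugatesOfSet_iff.mp h
      obtain ⟨x, hx⟩ := isConj_iff.mp hconj
      exact ⟨x, r⁻¹, .inr (by simpa using hr), by rw [← inv_inv (l.get i), ← hx]; group⟩
  choose x r hr hxr using hconj
  refine ⟨l.length, x, r, hr, ?_⟩
  rw [← congrArg List.ofFn (funext hxr), List.ofFn_get]

theorem areaLE_area (hg : g ∈ Subgroup.normalClosure R) : AreaLE R g (area R g) :=
  Nat.sInf_mem (exists_areaLE hg)

theorem AreaLE.natAbs_le_mul {E : Type*} [Group E] {Φ : FreeGroup A →* E}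
    {ι : Multiplicative ℤ →* E} (hι : ∀ z, ι z ∈ Subgroup.center E)
    (hι_inj : Function.Injective ι) {B : ℕ}
    (hR : ∀ r ∈ R, ∃ k : ℤ, Φ r = ι (.ofAdd k) ∧ k.natAbs ≤ B) {N : ℕ} {k : ℤ}
    (h : AreaLE R g N) (hk : Φ g = ι (.ofAdd k)) : k.natAbs ≤ N * B := by
  obtain ⟨x, r, hr, rfl⟩ := h
  have hr' : ∀ i, ∃ k : ℤ, Φ (r i) = ι (.ofAdd k) ∧ k.natAbs ≤ B := by
    intro i
    rcases hr i with h | h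
    · exact hR _ h
    · obtain ⟨k, hk, hkB⟩ := hR _ (Set.mem_inv.mp h)
      exact ⟨-k, by rw [← inv_inv (r i), map_inv, hk, ofAdd_neg, map_inv], by simpa using hkB⟩
  choose κ hκ hκB using hr'
  have hconj : ∀ i, Φ (x i * r i * (x i)⁻¹) = ι (.ofAdd (κ i)) := fun i => by
    rw [map_mul, map_mul, map_inv, hκ, Subgroup.mem_center_iff.mp (hι _), mul_inv_cancel_right]
  have hsum : Φ (List.ofFn fun i => x i * r i * (x i)⁻¹).prod = ι (.ofAdd (∑ i, κ i)) := by
    rw [ofAdd_sum, ← List.prod_ofFn, map_list_prod, map_list_prod, List.map_ofFn, List.map_ofFn]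
    exact congrArg (fun f => (List.ofFn f).prod) (funext hconj)
  obtain rfl : k = ∑ i, κ i := Multiplicative.ofAdd.injective (hι_inj (hk.symm.trans hsum))
  calc (∑ i, κ i).natAbs ≤ ∑ i, (κ i).natAbs := Int.natAbs_sum_le _ _
    _ ≤ ∑ _i : Fin N, B := Finset.sum_le_sum fun i _ => hκB i
    _ = N * B := by simp

theorem area_le_dehn [Finite A] [DecidableEq A] {G : Type*} [Group G] (μ : FreeGroup A →* G)
    (R : Set (FreeGroup A)) (hg : μ g = 1) {n : ℕ} (hn : g.norm ≤ n) : area R g ≤ dehn μ R n := by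
  have hfin := (List.finite_length_le (A × Bool) n).image fun w => area R (FreeGroup.mk w)
  refine le_csSup (hfin.bddAbove.mono ?_)
    ⟨g.toWord, hn, by rwa [FreeGroup.mk_toWord], by rw [FreeGroup.mk_toWord]⟩
  rintro _ ⟨w, hw, -, rfl⟩
  exact ⟨w, hw, rfl⟩

end Area

namespace NormalizedTwoCocycle

variable {G : Type*} [Group G] (c : NormalizedTwoCocycle G) {A : Type}

theorem exists_natAbs_fiber_le_area_mul {μ : FreeGroup A →* G} {R : Set (FreeGroup A)}
    (hR : R.Finite) (hker : μ.ker = Subgroup.normalClosure R) :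
    ∃ B, ∀ g, μ g = 1 → (c.lift μ g).fiber.natAbs ≤ area R g * B := by
  obtain ⟨B, hB⟩ := (hR.image fun r => (c.lift μ r).fiber.natAbs).bddAbove
  refine ⟨B, fun g hg => (areaLE_area (hker ▸ hg)).natAbs_le_mul c.inl_mem_center
    c.inl_injective (fun r hr => ⟨_, c.eq_inl_fiber ?_, hB ⟨r, hr, rfl⟩⟩) (c.eq_inl_fiber ?_)⟩
  · rw [base_lift, ← MonoidHom.mem_ker, hker]
    exact Subgroup.subset_normalClosure hr
  · rw [base_lift, hg]

end NormalizedTwoCocycle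

namespace FreeGroup

variable {α : Type*} [DecidableEq α]

theorem norm_pow_le (x : FreeGroup α) (n : ℕ) : (x ^ n).norm ≤ n * x.norm := by
  induction n with
  | zero => simp
  | succ n ih =>
    rw [pow_succ, add_one_mul]
    exact (norm_mul_le _ _).trans (by omega)

theorem norm_commutatorElement_le (x y : FreeGroup α) : ⁅x, y⁆.norm ≤ 2 * (x.norm + y.norm) := by
  have h₁ := norm_mul_le (x * y * x⁻¹) y⁻¹
  have h₂ := norm_mul_le (x * y) x⁻¹
  have h₃ := norm_mul_le x y
  rw [norm_inv_eq] at h₁ h₂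
  rw [commutatorElement_def]
  omega

end FreeGroup

/-- `⟨e, f, p⟩` stands for the unitriangular matrix `[[1, e, p], [0, 1, f], [0, 0, 1]]`. -/
@[ext] structure Heisenberg where
  e : ℤ
  f : ℤ
  p : ℤ

namespace Heisenberg

instance : Mul Heisenberg := ⟨fun x y => ⟨x.e + y.e, x.f + y.f, x.p + y.p + x.e * y.f⟩⟩
instance : One Heisenberg := ⟨⟨0, 0, 0⟩⟩
instance : Inv Heisenberg := ⟨fun x => ⟨-x.e, -x.f, -x.p + x.e * x.f⟩⟩

@[simp] lemma mul_e (x y : Heisenberg) : (x * y).e = x.e + y.e := rfl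
@[simp] lemma mul_f (x y : Heisenberg) : (x * y).f = x.f + y.f := rfl
@[simp] lemma mul_p (x y : Heisenberg) : (x * y).p = x.p + y.p + x.e * y.f := rfl
@[simp] lemma one_e : (1 : Heisenberg).e = 0 := rfl
@[simp] lemma one_f : (1 : Heisenberg).f = 0 := rfl
@[simp] lemma one_p : (1 : Heisenberg).p = 0 := rfl
@[simp] lemma inv_e (x : Heisenberg) : x⁻¹.e = -x.e := rfl
@[simp] lemma inv_f (x : Heisenberg) : x⁻¹.f = -x.f := rfl
@[simp] lemma inv_p (x : Heisenberg) : x⁻¹.p = -x.p + x.e * x.f := rfl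

instance : Group Heisenberg where
  mul_assoc x y z := by ext <;> simp <;> ring
  one_mul x := by ext <;> simp
  mul_one x := by ext <;> simp
  inv_mul_cancel x := by ext <;> simp

lemma mk_pow (e f : ℤ) (n : ℕ) :
    (⟨e, f, 0⟩ : Heisenberg) ^ n = ⟨n * e, n * f, n.choose 2 * e * f⟩ := by
  induction n with
  | zero => ext <;> simp
  | succ n ih => ext <;> simp [pow_succ, ih, Nat.choose_succ_succ'] <;> ring

def abelianization : Heisenberg →* Multiplicative (Fin 2 → ℤ) where
  toFun x := .ofAdd ![x.e, x.f]
  map_one' := by ext i; fin_cases i <;> rfl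
  map_mul' x y := by ext i; fin_cases i <;> rfl

end Heisenberg

def freeToHeisenberg : FreeGroup (Fin 2) →* Heisenberg := FreeGroup.lift ![⟨1, 0, 0⟩, ⟨0, 1, 0⟩]

lemma facHom_two_two : facHom 2 2 = Heisenberg.abelianization.comp freeToHeisenberg := by
  refine FreeGroup.ext_hom _ _ fun j => ?_
  ext i
  fin_cases j <;> fin_cases i <;> rfl

lemma mem_Kgrp_iff {g : Fin 3 → FreeGroup (Fin 2)} :
    g ∈ Kgrp 3 2 2 ↔
      ∑ i, (freeToHeisenberg (g i)).e = 0 ∧ ∑ i, (freeToHeisenberg (g i)).f = 0 := by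
  rw [Kgrp, MonoidHom.mem_ker]
  change ∏ i, facHom 2 2 (g i) = 1 ↔ _
  simp [facHom_two_two, Heisenberg.abelianization, ← ofAdd_sum, funext_iff, Fin.forall_fin_two]

def heisenbergCocycle (x y : Fin 3 → Heisenberg) : ℤ :=
  2 * (x 1).e * (y 0).p - 2 * (x 1).e * (y 0).e * (y 0).f + (x 1).f * (y 0).e ^ 2
    + 2 * ((x 0).p + (x 1).p - (x 2).p + (x 0).e * (x 1).f) * (y 0).e

lemma heisenbergCocycle_cocycle {x y : Fin 3 → Heisenberg} (z : Fin 3 → Heisenberg)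
    (hx : ∑ i, (x i).e = 0) (hy : ∑ i, (y i).f = 0) :
    heisenbergCocycle x y + heisenbergCocycle (x * y) z
      = heisenbergCocycle y z + heisenbergCocycle x (y * z) := by
  rw [Fin.sum_univ_three] at hx hy
  simp only [heisenbergCocycle, Pi.mul_apply, Heisenberg.mul_e, Heisenberg.mul_f,
    Heisenberg.mul_p]
  linear_combination (-2 * (z 0).e * (y 2).f) * hx + (2 * ((x 0).e + (x 1).e) * (z 0).e) * hy

namespace Kgrp

def toHeisenberg : Kgrp 3 2 2 →* (Fin 3 → Heisenberg) :=
  (MonoidHom.compLeft freeToHeisenberg (Fin 3)).comp (Kgrp 3 2 2).subtype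

@[simp] lemma toHeisenberg_apply (g : Kgrp 3 2 2) (i : Fin 3) :
    toHeisenberg g i = freeToHeisenberg (g.1 i) :=
  rfl

def cocycle : NormalizedTwoCocycle (Kgrp 3 2 2) where
  toFun g h := heisenbergCocycle (toHeisenberg g) (toHeisenberg h)
  map_one_left _ := by simp [heisenbergCocycle]
  map_one_right _ := by simp [heisenbergCocycle]
  cocycle g h k := by
    rw [map_mul, map_mul]
    exact heisenbergCocycle_cocycle _ (mem_Kgrp_iff.mp g.2).1 (mem_Kgrp_iff.mp h.2).2

def alpha : Kgrp 3 2 2 :=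
  ⟨![FreeGroup.of 0, (FreeGroup.of 0)⁻¹, 1],
    by simp [mem_Kgrp_iff, freeToHeisenberg, Fin.sum_univ_three]⟩

def alpha' : Kgrp 3 2 2 :=
  ⟨![1, FreeGroup.of 0, (FreeGroup.of 0)⁻¹],
    by simp [mem_Kgrp_iff, freeToHeisenberg, Fin.sum_univ_three]⟩

def beta : Kgrp 3 2 2 :=
  ⟨![FreeGroup.of 1, (FreeGroup.of 1)⁻¹, 1],
    by simp [mem_Kgrp_iff, freeToHeisenberg, Fin.sum_univ_three]⟩

lemma toHeisenberg_alpha_mul_alpha'_pow (n : ℕ) :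
    toHeisenberg ((alpha * alpha') ^ n) = ![⟨n, 0, 0⟩, 1, ⟨-n, 0, 0⟩] := by
  funext i
  fin_cases i <;> simp [alpha, alpha', freeToHeisenberg, Heisenberg.mk_pow, Heisenberg.ext_iff]

lemma toHeisenberg_commutatorElement_beta_inv_pow_alpha'_pow (n : ℕ) :
    toHeisenberg ⁅beta⁻¹ ^ n, alpha' ^ n⁆ = ![1, ⟨0, 0, -n ^ 2⟩, 1] := by
  funext i
  fin_cases i <;> simp [alpha', beta, freeToHeisenberg, Heisenberg.mk_pow, commutatorElement_def,
    Heisenberg.ext_iff, sq]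

lemma commute_alpha_mul_alpha'_pow_commutatorElement (n : ℕ) :
    Commute ((alpha * alpha') ^ n) ⁅beta⁻¹ ^ n, alpha' ^ n⁆ := by
  refine Subtype.ext (funext fun i => ?_)
  fin_cases i <;> simp [alpha, alpha', beta, commutatorElement_def]

lemma cocycle_sub_cocycle_swap (n : ℕ) :
    cocycle.toFun ((alpha * alpha') ^ n) ⁅beta⁻¹ ^ n, alpha' ^ n⁆
      - cocycle.toFun ⁅beta⁻¹ ^ n, alpha' ^ n⁆ ((alpha * alpha') ^ n) = 2 * n ^ 3 := by
  simp only [cocycle, toHeisenberg_alpha_mul_alpha'_pow,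
    toHeisenberg_commutatorElement_beta_inv_pow_alpha'_pow, heisenbergCocycle,
    Matrix.cons_val, Heisenberg.one_e, Heisenberg.one_f, Heisenberg.one_p]
  ring

end Kgrp

section CubicWord

variable {A : Type}

def cubicWord (p p' q : FreeGroup A) (n : ℕ) : FreeGroup A := ⁅(p * p') ^ n, ⁅q⁻¹ ^ n, p' ^ n⁆⁆

theorem norm_cubicWord_le [DecidableEq A] (p p' q : FreeGroup A) (n : ℕ) :
    (cubicWord p p' q n).norm ≤ n * (2 * p.norm + 6 * p'.norm + 4 * q.norm) := by
  have hx := (FreeGroup.norm_pow_le (p * p') n).trans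
    (Nat.mul_le_mul_left n (FreeGroup.norm_mul_le p p'))
  have hy := FreeGroup.norm_commutatorElement_le (q⁻¹ ^ n) (p' ^ n)
  have hq := FreeGroup.norm_pow_le q⁻¹ n
  have hp' := FreeGroup.norm_pow_le p' n
  rw [FreeGroup.norm_inv_eq] at hq
  refine (FreeGroup.norm_commutatorElement_le _ _).trans ?_
  nlinarith

variable {μ : FreeGroup A →* Kgrp 3 2 2} {p p' q : FreeGroup A}

theorem map_cubicWord (hp : μ p = Kgrp.alpha) (hp' : μ p' = Kgrp.alpha') (hq : μ q = Kgrp.beta)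
    (n : ℕ) : μ (cubicWord p p' q n) = 1 := by
  rw [cubicWord, map_commutatorElement, commutatorElement_eq_one_iff_commute]
  simpa [map_commutatorElement, hp, hp', hq] using
    Kgrp.commute_alpha_mul_alpha'_pow_commutatorElement n

theorem fiber_lift_cubicWord (hp : μ p = Kgrp.alpha) (hp' : μ p' = Kgrp.alpha')
    (hq : μ q = Kgrp.beta) (n : ℕ) :
    (Kgrp.cocycle.lift μ (cubicWord p p' q n)).fiber = 2 * n ^ 3 := by
  have hx : μ ((p * p') ^ n) = (Kgrp.alpha * Kgrp.alpha') ^ n := by simp [hp, hp']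
  have hy : μ ⁅q⁻¹ ^ n, p' ^ n⁆ = ⁅Kgrp.beta⁻¹ ^ n, Kgrp.alpha' ^ n⁆ := by
    simp [map_commutatorElement, hq, hp']
  rw [cubicWord, Kgrp.cocycle.fiber_lift_commutatorElement μ
    (hx ▸ hy ▸ Kgrp.commute_alpha_mul_alpha'_pow_commutatorElement n), hx, hy,
    Kgrp.cocycle_sub_cocycle_swap]

end CubicWord

/-- Let `K = K^3_2(2)` be the kernel of `θ : F_2 × F_2 × F_2 → ℤ²`, `θ(e^(i)_j) = t_j`.
For every finite presentation `P = ⟨A | R⟩` of `K` the Dehn function `δ_P` satisfies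
`n³ ⪯ δ_P`: there is a constant `C > 0` with `n³ ≤ C·δ_P(Cn + C) + Cn + C` for all `n`. -/
theorem dehn_function_cubic_lower_bound
    (A : Type) [Finite A] (μ : FreeGroup A →* (Kgrp 3 2 2))
    (hμ : Function.Surjective μ) (R : Set (FreeGroup A)) (hR : R.Finite)
    (hker : μ.ker = Subgroup.normalClosure R) :
    ∃ C : ℕ, 0 < C ∧ ∀ n : ℕ,
      n ^ 3 ≤ C * dehn μ R (C * n + C) + C * n + C := by
  classical
  obtain ⟨p, hp⟩ := hμ Kgrp.alpha
  obtain ⟨p', hp'⟩ := hμ Kgrp.alpha'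
  obtain ⟨q, hq⟩ := hμ Kgrp.beta
  obtain ⟨B, hB⟩ := Kgrp.cocycle.exists_natAbs_fiber_le_area_mul hR hker
  set L := 2 * p.norm + 6 * p'.norm + 4 * q.norm
  refine ⟨B + L + 1, by omega, fun n => ?_⟩
  have hw := map_cubicWord hp hp' hq n
  have harea : 2 * n ^ 3 ≤ area R (cubicWord p p' q n) * B := by
    have := hB _ hw
    rwa [fiber_lift_cubicWord hp hp' hq, Int.natAbs_mul, Int.natAbs_pow] at this
  have hlen : (cubicWord p p' q n).norm ≤ (B + L + 1) * n + (B + L + 1) :=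
    calc _ ≤ n * L := norm_cubicWord_le p p' q n
      _ ≤ (B + L + 1) * n + (B + L + 1) := by nlinarith
  have hdehn := area_le_dehn μ R hw hlen
  nlinarith
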